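/- Let E(v̄,s) = (4s/((2v̄+s)²-16)) · [[s+4-2v̄, 4],[(s+4)(s-2)+4v̄, 3s-4+2v̄]] for |2v̄+s| < 4. Then E(v̄,s) = A(v̄+s, 2v̄+s)⁻¹ · (J(v̄+s) - J(v̄)), where J(v) = 4·[[v-1,-1],[v(v-2),1-v]] and A(v,γ) = γI - J(v). -/

import Mathlib

/-!
The matrix `J v` has trace `0` and determinant `-16`, so `J v * J v = 16` by Cayley–Hamilton.
Hence `(γ - J v) * (γ + J v) = γ ^ 2 - 16`, which inverts `A v γ` explicitly for `γ ^ 2 ≠ 16`;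
multiplying this inverse with `J (v + s) - J v = 4 s • !![1, 0; 2 v + s - 2, -1]` gives `E v s`.
-/

noncomputable def Jmat (v : ℝ) : Matrix (Fin 2) (Fin 2) ℝ :=
  (4 : ℝ) • !![v - 1, -1; v * (v - 2), 1 - v]

noncomputable def Amat (v γ : ℝ) : Matrix (Fin 2) (Fin 2) ℝ :=
  γ • (1 : Matrix (Fin 2) (Fin 2) ℝ) - Jmat v

noncomputable def Emat (v s : ℝ) : Matrix (Fin 2) (Fin 2) ℝ :=
  (4 * s / ((2 * v + s) ^ 2 - 16)) •
    !![s + 4 - 2 * v, 4; (s + 4) * (s - 2) + 4 * v, 3 * s - 4 + 2 * v]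

open Matrix

lemma Jmat_mul_self (v : ℝ) : Jmat v * Jmat v = (16 : ℝ) • 1 := by
  ext i j
  fin_cases i <;> fin_cases j <;>
    simp [Jmat, mul_apply, Fin.sum_univ_two] <;> ring

lemma Amat_mul_add_Jmat (v γ : ℝ) :
    Amat v γ * (γ • 1 + Jmat v) = (γ ^ 2 - 16) • 1 := by
  rw [Amat, sub_mul, mul_add, mul_add, Jmat_mul_self, smul_mul_smul_comm, mul_one, ← sq,
    smul_one_mul, mul_smul_one, sub_smul]
  abel

lemma Amat_inv (v : ℝ) {γ : ℝ} (hγ : γ ^ 2 ≠ 16) :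
    (Amat v γ)⁻¹ = (γ ^ 2 - 16)⁻¹ • (γ • 1 + Jmat v) := by
  apply inv_eq_right_inv
  rw [mul_smul_comm, Amat_mul_add_Jmat, smul_smul, inv_mul_cancel₀ (sub_ne_zero.mpr hγ),
    one_smul]

lemma Jmat_add_sub_Jmat (v s : ℝ) :
    Jmat (v + s) - Jmat v = (4 * s) • !![1, 0; 2 * v + s - 2, -1] := by
  ext i j
  fin_cases i <;> fin_cases j <;> simp [Jmat] <;> ring

lemma smul_one_add_Jmat_mul (v s : ℝ) :
    ((2 * v + s) • 1 + Jmat (v + s)) * !![1, 0; 2 * v + s - 2, -1] =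
      !![s + 4 - 2 * v, 4; (s + 4) * (s - 2) + 4 * v, 3 * s - 4 + 2 * v] := by
  ext i j
  fin_cases i <;> fin_cases j <;>
    simp [Jmat, mul_apply, Fin.sum_univ_two, one_apply] <;> ring

theorem stmt3 (vb s : ℝ) (h : |2 * vb + s| < 4) :
    Emat vb s = (Amat (vb + s) (2 * vb + s))⁻¹ * (Jmat (vb + s) - Jmat vb) := by
  have hγ : (2 * vb + s) ^ 2 ≠ 16 :=
    (sq_lt_sq' (abs_lt.mp h).1 (abs_lt.mp h).2).ne.trans_eq (by norm_num)
  rw [Amat_inv _ hγ, Jmat_add_sub_Jmat, smul_mul_smul_comm, smul_one_add_Jmat_mul, Emat,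
    div_eq_inv_mul]
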